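/- arXiv:2406.00131 — 4 statements merged into one kernel-verified Lean document; each statement's English description precedes it below -/
import Mathlib

section
/- Let f : Finset(V) × V → R^V be any function from (unordered set of two tokens, third token) to prediction scores, used to predict the fourth token of sequences of the form x1 x2 x3 x1 with distinct x1, x2, x3 drawn uniformly from a vocabulary V with |V| ≥ 3, under cross-entropy loss with softmax. Then the expected cross-entropy loss is bounded below by log 2, and in particular cannot be zero; moreover no such f achieves perfect accuracy (predicting x1 as argmax) on all such sequences. -/
open Finset Real

lemma aux_pair {V : Type*} [Fintype V] [DecidableEq V] (g : V → ℝ) (a b : V) (hab : a ≠ b) :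
    2 * Real.log 2 ≤ -(Real.log (Real.exp (g a) / ∑ d : V, Real.exp (g d))) +
      -(Real.log (Real.exp (g b) / ∑ d : V, Real.exp (g d))) := by
  have hZ : 0 < ∑ d : V, Real.exp (g d) :=
    Finset.sum_pos (fun d _ => Real.exp_pos _) ⟨a, Finset.mem_univ a⟩
  set Z := ∑ d : V, Real.exp (g d) with hZdef
  set p := Real.exp (g a) / Z with hp
  set q := Real.exp (g b) / Z with hq
  have hp0 : 0 < p := by positivity
  have hq0 : 0 < q := by positivity
  have hsum : p + q ≤ 1 := by
    rw [hp, hq, ← add_div, div_le_one hZ]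
    have : ∑ d ∈ ({a, b} : Finset V), Real.exp (g d) ≤ Z := by
      apply Finset.sum_le_sum_of_subset_of_nonneg (Finset.subset_univ _)
      intro i _ _; exact (Real.exp_pos _).le
    rwa [Finset.sum_pair hab] at this
  have hprod : p * q ≤ 1 / 4 := by nlinarith [sq_nonneg (p - q)]
  have hlog : Real.log (p * q) ≤ Real.log (1 / 4) :=
    Real.log_le_log (by positivity) hprod
  have h4 : Real.log (1 / 4) = -(2 * Real.log 2) := by
    rw [Real.log_div one_ne_zero (by norm_num), Real.log_one]
    have : (4 : ℝ) = 2 ^ 2 := by norm_num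
    rw [this, Real.log_pow]
    push_cast; ring
  rw [Real.log_mul hp0.ne' hq0.ne'] at hlog
  linarith [hlog, h4 ▸ hlog]

/-- A position-unaware one-layer model `f`, predicting the fourth token of sequences
x1 x2 x3 x1 (distinct tokens) from the unordered pair {x1,x2} and x3 under
softmax cross-entropy, has expected loss at least log 2 (in particular nonzero),
and cannot achieve perfect accuracy on all such sequences. -/
theorem stmt_3 {V : Type*} [Fintype V] [DecidableEq V] (hV : 3 ≤ Fintype.card V)
    (f : Finset V × V → V → ℝ) :
    (Real.log 2 ≤
      (∑ t ∈ (Finset.univ.filter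
          (fun t : V × V × V => t.1 ≠ t.2.1 ∧ t.2.1 ≠ t.2.2 ∧ t.1 ≠ t.2.2)),
        -(Real.log (Real.exp (f (({t.1, t.2.1} : Finset V), t.2.2) t.1) /
            ∑ d : V, Real.exp (f (({t.1, t.2.1} : Finset V), t.2.2) d)))) /
        ((Finset.univ.filter
          (fun t : V × V × V => t.1 ≠ t.2.1 ∧ t.2.1 ≠ t.2.2 ∧ t.1 ≠ t.2.2)).card : ℝ)) ∧
    ((∑ t ∈ (Finset.univ.filter
          (fun t : V × V × V => t.1 ≠ t.2.1 ∧ t.2.1 ≠ t.2.2 ∧ t.1 ≠ t.2.2)),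
        -(Real.log (Real.exp (f (({t.1, t.2.1} : Finset V), t.2.2) t.1) /
            ∑ d : V, Real.exp (f (({t.1, t.2.1} : Finset V), t.2.2) d)))) /
        ((Finset.univ.filter
          (fun t : V × V × V => t.1 ≠ t.2.1 ∧ t.2.1 ≠ t.2.2 ∧ t.1 ≠ t.2.2)).card : ℝ) ≠ 0) ∧
    ¬ (∀ x1 x2 x3 : V, x1 ≠ x2 → x2 ≠ x3 → x1 ≠ x3 →
        ∀ d : V, d ≠ x1 →
          f (({x1, x2} : Finset V), x3) d < f (({x1, x2} : Finset V), x3) x1) := by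
  -- three distinct elements
  obtain ⟨s, -, hs3⟩ := Finset.exists_subset_card_eq (s := (Finset.univ : Finset V)) (n := 3) (by simpa using hV)
  obtain ⟨a, b, c, hab, hac, hbc, rfl⟩ := Finset.card_eq_three.mp hs3
  set S : Finset (V × V × V) := Finset.univ.filter
      (fun t : V × V × V => t.1 ≠ t.2.1 ∧ t.2.1 ≠ t.2.2 ∧ t.1 ≠ t.2.2) with hSdef
  set g : V × V × V → ℝ := fun t =>
    -(Real.log (Real.exp (f (({t.1, t.2.1} : Finset V), t.2.2) t.1) /
        ∑ d : V, Real.exp (f (({t.1, t.2.1} : Finset V), t.2.2) d))) with hgdef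
  have hSne : S.Nonempty := ⟨(a, b, c), by simp [hSdef, hab, hbc, hac]⟩
  have hN : 0 < (S.card : ℝ) := by exact_mod_cast Finset.card_pos.mpr hSne
  -- swap reindexing
  have hswap : ∑ t ∈ S, g t = ∑ t ∈ S, g (t.2.1, t.1, t.2.2) := by
    apply Finset.sum_nbij' (fun t => (t.2.1, t.1, t.2.2)) (fun t => (t.2.1, t.1, t.2.2))
    · intro t ht
      simp only [hSdef, Finset.mem_filter, Finset.mem_univ, true_and] at ht ⊢
      exact ⟨ht.1.symm, ht.2.2, ht.2.1⟩
    · intro t ht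
      simp only [hSdef, Finset.mem_filter, Finset.mem_univ, true_and] at ht ⊢
      exact ⟨ht.1.symm, ht.2.2, ht.2.1⟩
    · intro t _; rfl
    · intro t _; rfl
    · intro t _; rfl
  have key : (S.card : ℝ) * (2 * Real.log 2) ≤ 2 * ∑ t ∈ S, g t := by
    have : 2 * ∑ t ∈ S, g t = ∑ t ∈ S, (g t + g (t.2.1, t.1, t.2.2)) := by
      rw [Finset.sum_add_distrib, ← hswap]; ring
    rw [this]
    calc (S.card : ℝ) * (2 * Real.log 2) = ∑ _t ∈ S, 2 * Real.log 2 := by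
          rw [Finset.sum_const, nsmul_eq_mul]
      _ ≤ ∑ t ∈ S, (g t + g (t.2.1, t.1, t.2.2)) := by
          apply Finset.sum_le_sum
          intro t ht
          simp only [hSdef, Finset.mem_filter, Finset.mem_univ, true_and] at ht
          have := aux_pair (f (({t.1, t.2.1} : Finset V), t.2.2)) t.1 t.2.1 ht.1
          simp only [hgdef]
          rw [Finset.pair_comm t.2.1 t.1]
          exact this
  have havg : Real.log 2 ≤ (∑ t ∈ S, g t) / (S.card : ℝ) := by
    rw [le_div_iff₀ hN]
    linarith
  have hlog2 : 0 < Real.log 2 := Real.log_pos (by norm_num)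
  refine ⟨havg, by intro h; rw [h] at havg; linarith, ?_⟩
  intro h
  have h1 := h a b c hab hbc hac b hab.symm
  have h2 := h b a c hab.symm hac hbc a hab
  rw [Finset.pair_comm b a] at h2
  linarith
end

section
/- Suppose reals a, e, K with a > 0, e > 0, K ≥ 2 satisfy the linear system: a(q5 - q7) = (e + a(K-2))(q8 - q6) and e(q5 - q7) = a(K-1)(q8 - q6) + 1 for reals q5, q6, q7, q8. If e > a, then q8 > q6 and (K-2)q6 + q5 > (K-2)q8 + q7. -/
/-- Key algebraic step of Theorem 2 (task selection in CBOW): from the linear system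
a(q5 - q7) = (e + a(K-2))(q8 - q6) and e(q5 - q7) = a(K-1)(q8 - q6) + 1,
with 0 < a < e and K ≥ 2, we get q8 > q6 and (K-2)q6 + q5 > (K-2)q8 + q7. -/
theorem stmt_11 (a e K q5 q6 q7 q8 : ℝ) (ha : 0 < a) (he : 0 < e) (hK : 2 ≤ K)
    (hea : a < e)
    (h1 : a * (q5 - q7) = (e + a * (K - 2)) * (q8 - q6))
    (h2 : e * (q5 - q7) = a * (K - 1) * (q8 - q6) + 1) :
    q6 < q8 ∧ (K - 2) * q8 + q7 < (K - 2) * q6 + q5 := by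
  have hfac : (e - a) * (e + a * (K - 1)) > 0 := by
    apply mul_pos (by linarith)
    nlinarith
  have key : (q8 - q6) * ((e - a) * (e + a * (K - 1))) = a := by nlinarith
  have h6 : q6 < q8 := by nlinarith
  constructor
  · exact h6
  · nlinarith [mul_pos he (sub_pos.mpr h6)]
end

section
/- In the setting of Theorem 5 (failed scenario 1): training sequences are concatenations of N independent blocks x_{i1} x_{i2} x_{i1} with (x_{i1},x_{i2}) uniform on S1. The loss-minimizing autoregressive predictor, applied to a test prompt consisting of blocks of the different repeated pattern u v v (with (u,v) ∈ S2, u ≠ v) followed by u' v' with (u',v') ∈ S2, predicts u' (the first token of the current block) rather than v'. In particular, if the target is v' ≠ u', the accuracy is 0. -/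
open Finset Real

/-- Point mass distribution at x. -/
def pointMass {V : Type*} [DecidableEq V] (x : V) : V → ℝ := fun v => if v = x then 1 else 0

/-- Token sequence of a training sample: concatenation of blocks x y x. -/
def trainSeq {V : Type*} {N : ℕ} (s : Fin N → V × V) : List V :=
  (List.ofFn s).flatMap fun p => [p.1, p.2, p.1]

/-- Test prompt: blocks u v v from S2 followed by a final incomplete block u' v'. -/
def testPrompt {V : Type*} {ℓ : ℕ} (t : Fin ℓ → V × V) : List V :=
  ((List.ofFn t).flatMap fun p => [p.1, p.2, p.2]).dropLast

/-- Training likelihood (maximizing it is equivalent to minimizing the autoregressive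
cross-entropy training loss) of a next-token predictor over all training sequences
of N blocks from S1. -/
def trainLik {V : Type*} [Fintype V] [DecidableEq V] [Inhabited V] (N : ℕ)
    (S1 : Finset (V × V)) (pred : List V → V → ℝ) : ℝ :=
  ∏ s : Fin N → V × V,
    if ∀ i, s i ∈ S1 then
      ∏ t ∈ Finset.range (3 * N),
        pred ((trainSeq s).take t) ((trainSeq s).getD t default)
    else 1

/- ---------- auxiliary lemmas ---------- -/

lemma aux_length_flatMap3 {V : Type*} (g : V × V → List V) (h3 : ∀ p, (g p).length = 3) :
    ∀ (n : ℕ) (f : Fin n → V × V), ((List.ofFn f).flatMap g).length = 3 * n := by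
  intro n
  induction n with
  | zero => intro f; simp
  | succ m ih =>
    intro f
    rw [List.ofFn_succ, List.flatMap_cons, List.length_append, h3, ih]
    ring

lemma aux_getD_flatMap3 {V : Type*} [Inhabited V] (g : V × V → List V)
    (h3 : ∀ p, (g p).length = 3) :
    ∀ (n : ℕ) (f : Fin n → V × V) (k : ℕ) (hk : k < n) (r : ℕ), r < 3 →
    ((List.ofFn f).flatMap g).getD (3 * k + r) default
      = (g (f ⟨k, hk⟩)).getD r default := by
  intro n
  induction n with
  | zero => intro f k hk; omega
  | succ m ih =>
    intro f k hk r hr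
    rw [List.ofFn_succ, List.flatMap_cons]
    cases k with
    | zero =>
      rw [List.getD_append _ _ _ _ (by rw [h3]; omega)]
      norm_num
    | succ k' =>
      rw [List.getD_append_right _ _ _ _ (by rw [h3]; omega)]
      have harith : 3 * (k' + 1) + r - (g (f 0)).length = 3 * k' + r := by rw [h3]; omega
      rw [harith, ih (fun i => f i.succ) k' (by omega) r hr]
      rfl

lemma aux_prod_pos_each {ι : Type*} (s : Finset ι) (a : ι → ℝ)
    (h0 : ∀ i ∈ s, 0 ≤ a i) (hp : 0 < ∏ i ∈ s, a i) : ∀ i ∈ s, 0 < a i := by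
  intro i hi
  rcases (h0 i hi).lt_or_eq with h | h
  · exact h
  · exact absurd hp (by rw [Finset.prod_eq_zero hi h.symm]; exact lt_irrefl 0)

lemma aux_prod_eq_forces {ι : Type*} (s : Finset ι) (a b : ι → ℝ)
    (h0 : ∀ i ∈ s, 0 ≤ a i) (hle : ∀ i ∈ s, a i ≤ b i)
    (heq : (∏ i ∈ s, a i) = ∏ i ∈ s, b i) (hp : 0 < ∏ i ∈ s, b i) :
    ∀ i ∈ s, a i = b i := by
  intro i hi
  by_contra hne
  have ha : 0 < ∏ i ∈ s, a i := heq ▸ hp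
  have hapos := aux_prod_pos_each s a h0 ha
  have hlt : (∏ i ∈ s, a i) < ∏ i ∈ s, b i :=
    Finset.prod_lt_prod hapos hle ⟨i, hi, lt_of_le_of_ne (hle i hi) hne⟩
  exact absurd heq (ne_of_lt hlt)

/-- The "repeat the token two back" predictor, uniform elsewhere. -/
noncomputable def predRep (V : Type*) [Fintype V] [DecidableEq V] [Inhabited V]
    (q : List V → V → ℝ) : List V → V → ℝ :=
  fun p v => if p.length % 3 = 2 then (if v = p.getD (p.length - 2) default then 1 else 0)
    else q p v

lemma predRep_prob {V : Type*} [Fintype V] [DecidableEq V] [Inhabited V]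
    (q : List V → V → ℝ) (hq : ∀ p : List V, (∀ w, 0 ≤ q p w) ∧ ∑ w, q p w = 1) :
    ∀ p : List V, (∀ w, 0 ≤ predRep V q p w) ∧ ∑ w, predRep V q p w = 1 := by
  intro p
  constructor
  · intro w
    unfold predRep
    split
    · split <;> norm_num
    · exact (hq p).1 w
  · unfold predRep
    split
    · rw [Finset.sum_ite_eq']; simp
    · exact (hq p).2

lemma uniform_prob (V : Type*) [Fintype V] [DecidableEq V] [Inhabited V] :
    ∀ p : List V, (∀ w, 0 ≤ (fun (_ : List V) (_ : V) => (Fintype.card V : ℝ)⁻¹) p w) ∧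
      ∑ w, (fun (_ : List V) (_ : V) => (Fintype.card V : ℝ)⁻¹) p w = 1 := by
  intro p
  have hc : (0 : ℝ) < Fintype.card V := by
    have := Fintype.card_pos (α := V); positivity
  constructor
  · intro w; positivity
  · rw [Finset.sum_const, nsmul_eq_mul, Finset.card_univ]
    field_simp

/-- Failed scenario 1 (Theorem 5): training sequences repeat the pattern x y x in each
block, pairs from S1; both S1 and S2 have full first-coordinate projection. A
position-aware predictor whose output at positions ≡ 2 (mod 3) depends only on the
position and the token two places back, and which maximizes the training likelihood
(i.e., minimizes the theoretical autoregressive loss), when given a test prompt of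
blocks u v v from S2 ending with u' v', predicts u' with probability one — never the
pattern-completing token v'. Hence ICL accuracy is zero. -/
theorem stmt_13 {V : Type*} [Fintype V] [DecidableEq V] [Inhabited V]
    (N : ℕ) (hN : 1 ≤ N) (S1 S2 : Finset (V × V))
    (hpart : ∀ p : V × V, p.1 ≠ p.2 → (p ∈ S1 ↔ p ∉ S2))
    (hS1 : ∀ p ∈ S1, p.1 ≠ p.2) (hS2 : ∀ p ∈ S2, p.1 ≠ p.2)
    (hproj1 : ∀ v : V, ∃ w : V, (v, w) ∈ S1)
    (hproj2 : ∀ v : V, ∃ w : V, (v, w) ∈ S2)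
    (pred : List V → V → ℝ)
    (hprob : ∀ p : List V, (∀ w, 0 ≤ pred p w) ∧ ∑ w, pred p w = 1)
    (hinv : ∀ p q : List V, p.length = q.length → p.length % 3 = 2 →
      p.getD (p.length - 2) default = q.getD (q.length - 2) default → pred p = pred q)
    (hmax : ∀ pred' : List V → V → ℝ,
      (∀ p : List V, (∀ w, 0 ≤ pred' p w) ∧ ∑ w, pred' p w = 1) →
      trainLik N S1 pred' ≤ trainLik N S1 pred) :
    ∀ (ℓ : ℕ), 1 ≤ ℓ → ℓ ≤ N → ∀ t : Fin ℓ → V × V, (∀ i, t i ∈ S2) →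
      ∀ hlast : ℓ - 1 < ℓ,
        pred (testPrompt t) = pointMass (t ⟨ℓ - 1, hlast⟩).1 := by
  classical
  intro ℓ hℓ1 hℓN t ht hlast
  set u' : V := (t ⟨ℓ - 1, hlast⟩).1 with hu'
  obtain ⟨w, hw⟩ := hproj1 u'
  set s : Fin N → V × V := fun _ => (u', w) with hs
  have hsS1 : ∀ i, s i ∈ S1 := fun _ => hw
  -- basic length/getD facts about trainSeq
  have hlenTS : ∀ s' : Fin N → V × V, (trainSeq s').length = 3 * N := by
    intro s'
    exact aux_length_flatMap3 (fun p : V × V => [p.1, p.2, p.1]) (fun _ => rfl) N s'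
  have hgetTS : ∀ (s' : Fin N → V × V) (k : ℕ) (hk : k < N) (r : ℕ), r < 3 →
      (trainSeq s').getD (3 * k + r) default
        = ([(s' ⟨k, hk⟩).1, (s' ⟨k, hk⟩).2, (s' ⟨k, hk⟩).1]).getD r default := by
    intro s' k hk r hr
    exact aux_getD_flatMap3 (fun p : V × V => [p.1, p.2, p.1]) (fun _ => rfl) N s' k hk r hr
  have hgetTake : ∀ (s' : Fin N → V × V) (τ m : ℕ), τ ≤ 3 * N → m < τ →
      ((trainSeq s').take τ).getD m default = (trainSeq s').getD m default := by
    intro s' τ m hτ hm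
    have h1 : m < ((trainSeq s').take τ).length := by
      rw [List.length_take, hlenTS]; omega
    rw [List.getD_eq_getElem _ _ h1, List.getElem_take,
      List.getD_eq_getElem _ _ (by rw [hlenTS]; omega)]
  have hlenTake : ∀ (s' : Fin N → V × V) (τ : ℕ), τ ≤ 3 * N →
      ((trainSeq s').take τ).length = τ := by
    intro s' τ hτ; rw [List.length_take, hlenTS]; omega
  -- key: at positions ≡ 2 mod 3, the training target equals the token two back
  have key : ∀ (s' : Fin N → V × V) (k : ℕ) (hk : k < N),
      ((trainSeq s').take (3 * k + 2)).getD (3 * k) default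
        = (trainSeq s').getD (3 * k + 2) default ∧
      (trainSeq s').getD (3 * k + 2) default = (s' ⟨k, hk⟩).1 := by
    intro s' k hk
    have h2 : (trainSeq s').getD (3 * k + 2) default = (s' ⟨k, hk⟩).1 := by
      rw [hgetTS s' k hk 2 (by norm_num)]; rfl
    have h0 : (trainSeq s').getD (3 * k) default = (s' ⟨k, hk⟩).1 := by
      have := hgetTS s' k hk 0 (by norm_num)
      simpa using this
    refine ⟨?_, h2⟩
    rw [hgetTake s' (3 * k + 2) (3 * k) (by omega) (by omega), h0, h2]
  -- predictors are pointwise at most 1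
  have hle1 : ∀ (q : List V → V → ℝ),
      (∀ p : List V, (∀ w, 0 ≤ q p w) ∧ ∑ w, q p w = 1) →
      ∀ p v, q p v ≤ 1 := by
    intro q hq p v
    calc q p v ≤ ∑ w, q p w := Finset.single_le_sum (fun i _ => (hq p).1 i) (Finset.mem_univ v)
    _ = 1 := (hq p).2
  -- the uniform-based repeat predictor has positive likelihood
  have hrepprob := predRep_prob (fun _ _ => (Fintype.card V : ℝ)⁻¹) (uniform_prob V)
  have hcard : (0 : ℝ) < Fintype.card V := by
    have := Fintype.card_pos (α := V); positivity
  have hfactor1 : ∀ (q : List V → V → ℝ) (s' : Fin N → V × V) (τ : ℕ), τ < 3 * N →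
      τ % 3 = 2 →
      predRep V q ((trainSeq s').take τ) ((trainSeq s').getD τ default) = 1 := by
    intro q s' τ hτ hmod
    obtain ⟨k, hk, rfl⟩ : ∃ k, k < N ∧ τ = 3 * k + 2 := ⟨τ / 3, by omega, by omega⟩
    obtain ⟨hkey1, hkey2⟩ := key s' k hk
    unfold predRep
    rw [if_pos (by rw [hlenTake s' _ (by omega)]; omega)]
    rw [if_pos]
    rw [hlenTake s' _ (by omega)]
    have : 3 * k + 2 - 2 = 3 * k := by omega
    rw [this, hkey1]
  have hlik0 : 0 < trainLik N S1 (predRep V (fun _ _ => (Fintype.card V : ℝ)⁻¹)) := by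
    unfold trainLik
    apply Finset.prod_pos
    intro s' _
    split
    · apply Finset.prod_pos
      intro τ hτ
      rw [Finset.mem_range] at hτ
      by_cases hmod : τ % 3 = 2
      · rw [hfactor1 _ s' τ hτ hmod]; norm_num
      · unfold predRep
        rw [if_neg (by rw [hlenTake s' _ (by omega)]; exact hmod)]
        positivity
    · norm_num
  -- comparison between pred and predRep V pred
  have hfixprob := predRep_prob pred hprob
  have houter_nonneg : ∀ s' : Fin N → V × V,
      0 ≤ (if ∀ i, s' i ∈ S1 then
        ∏ τ ∈ Finset.range (3 * N),
          pred ((trainSeq s').take τ) ((trainSeq s').getD τ default) else 1) := by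
    intro s'
    split
    · exact Finset.prod_nonneg fun τ _ => (hprob _).1 _
    · norm_num
  have houter_le : ∀ s' : Fin N → V × V,
      (if ∀ i, s' i ∈ S1 then
        ∏ τ ∈ Finset.range (3 * N),
          pred ((trainSeq s').take τ) ((trainSeq s').getD τ default) else 1)
      ≤ (if ∀ i, s' i ∈ S1 then
        ∏ τ ∈ Finset.range (3 * N),
          predRep V pred ((trainSeq s').take τ) ((trainSeq s').getD τ default) else 1) := by
    intro s'
    by_cases hc : ∀ i, s' i ∈ S1
    · rw [if_pos hc, if_pos hc]
      apply Finset.prod_le_prod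
      · intro τ _; exact (hprob _).1 _
      · intro τ hτ
        rw [Finset.mem_range] at hτ
        by_cases hmod : τ % 3 = 2
        · rw [hfactor1 pred s' τ hτ hmod]
          exact hle1 pred hprob _ _
        · unfold predRep
          rw [if_neg (by rw [hlenTake s' _ (by omega)]; exact hmod)]
    · rw [if_neg hc, if_neg hc]
  have hlik_le : trainLik N S1 pred ≤ trainLik N S1 (predRep V pred) := by
    unfold trainLik
    exact Finset.prod_le_prod (fun s' _ => houter_nonneg s') (fun s' _ => houter_le s')
  have hlik_eq : trainLik N S1 pred = trainLik N S1 (predRep V pred) :=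
    le_antisymm hlik_le (hmax _ hfixprob)
  have hlik_pos : 0 < trainLik N S1 (predRep V pred) := by
    rw [← hlik_eq]
    exact lt_of_lt_of_le hlik0 (hmax _ hrepprob)
  -- force factorwise equality (outer, then inner at s)
  have houter_eq := aux_prod_eq_forces Finset.univ _ _
    (fun s' _ => houter_nonneg s') (fun s' _ => houter_le s')
    (by unfold trainLik at hlik_eq; exact hlik_eq) (by unfold trainLik at hlik_pos; exact hlik_pos)
    s (Finset.mem_univ s)
  have houterB_pos := aux_prod_pos_each Finset.univ _
    (fun s' _ => le_trans (houter_nonneg s') (houter_le s'))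
    (by unfold trainLik at hlik_pos; exact hlik_pos) s (Finset.mem_univ s)
  simp only [if_pos hsS1] at houter_eq houterB_pos
  have hinner_eq := aux_prod_eq_forces (Finset.range (3 * N)) _ _
    (fun τ _ => (hprob _).1 _)
    (fun τ hτ => by
      rw [Finset.mem_range] at hτ
      by_cases hmod : τ % 3 = 2
      · rw [hfactor1 pred s τ hτ hmod]; exact hle1 pred hprob _ _
      · unfold predRep
        rw [if_neg (by rw [hlenTake s _ (by omega)]; exact hmod)])
    houter_eq houterB_pos
  -- specialize at the last block's third position
  have ht0mem : 3 * (ℓ - 1) + 2 ∈ Finset.range (3 * N) := Finset.mem_range.mpr (by omega)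
  have hpt := hinner_eq _ ht0mem
  rw [hfactor1 pred s (3 * (ℓ - 1) + 2) (by omega) (by omega)] at hpt
  obtain ⟨hkey1, hkey2⟩ := key s (ℓ - 1) (by omega)
  rw [hkey2] at hpt
  have hsval : (s ⟨ℓ - 1, by omega⟩).1 = u' := rfl
  rw [hsval] at hpt
  -- pred at the training prefix is the point mass at u'
  set P : List V := (trainSeq s).take (3 * (ℓ - 1) + 2) with hP
  have hPlen : P.length = 3 * (ℓ - 1) + 2 := hlenTake s _ (by omega)
  have hpredP : pred P = pointMass u' := by
    funext v
    unfold pointMass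
    by_cases hv : v = u'
    · rw [if_pos hv, hv]; exact hpt
    · rw [if_neg hv]
      have hsum := (hprob P).2
      have hadd := Finset.add_sum_erase Finset.univ (pred P) (Finset.mem_univ u')
      have hzero : ∑ x ∈ Finset.univ.erase u', pred P x = 0 := by
        rw [hpt] at hadd; linarith [hadd, hsum]
      exact (Finset.sum_eq_zero_iff_of_nonneg
        (fun x _ => (hprob P).1 x)).mp hzero v (Finset.mem_erase.mpr ⟨hv, Finset.mem_univ v⟩)
  -- transfer to the test prompt via invariance
  have hTlenfull : ((List.ofFn t).flatMap fun p => [p.1, p.2, p.2]).length = 3 * ℓ :=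
    aux_length_flatMap3 (fun p : V × V => [p.1, p.2, p.2]) (fun _ => rfl) ℓ t
  have hTlen : (testPrompt t).length = 3 * (ℓ - 1) + 2 := by
    unfold testPrompt
    rw [List.length_dropLast, hTlenfull]; omega
  have hTget : (testPrompt t).getD (3 * (ℓ - 1)) default = u' := by
    unfold testPrompt
    have hb : 3 * (ℓ - 1) < (((List.ofFn t).flatMap fun p => [p.1, p.2, p.2]).dropLast).length := by
      rw [List.length_dropLast, hTlenfull]; omega
    rw [List.getD_eq_getElem _ _ hb, List.getElem_dropLast,
      ← List.getD_eq_getElem _ default (by rw [hTlenfull]; omega)]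
    have := aux_getD_flatMap3 (fun p : V × V => [p.1, p.2, p.2]) (fun p => rfl)
      ℓ t (ℓ - 1) hlast 0 (by norm_num)
    simpa using this
  have hPget : P.getD (3 * (ℓ - 1)) default = u' := by
    rw [hP, hgetTake s _ (3 * (ℓ - 1)) (by omega) (by omega)]
    have := hgetTS s (ℓ - 1) (by omega) 0 (by norm_num)
    simpa using this
  have hEq : pred (testPrompt t) = pred P := by
    apply hinv
    · rw [hTlen, hPlen]
    · rw [hTlen]; omega
    · rw [hTlen, hPlen]
      have h1 : 3 * (ℓ - 1) + 2 - 2 = 3 * (ℓ - 1) := by omega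
      rw [h1, hTget, hPget]
  rw [hEq, hpredP]
end

section
/- In the one-noisy scenario of Theorem 4: training sentences are a b a c d c of length 6 from pairs in S1 with exactly one noise token n ∈ N inserted uniformly among the first 6 positions (never last), giving length-7 sentences. The Bayes-optimal predictor of the token following a noise-free prefix of length 5 assigns all its mass to noise tokens N. Hence on any test prompt a' b' a' c' d' (pairs from S2, no noise tokens) the predicted argmax token lies in N, and since the target c' ∉ N, the ICL accuracy is 0. -/
open Finset Classical

section OneNoisy

variable {T : Type*} [Fintype T] [DecidableEq T]

/-- A one-noisy training sentence: a b a c d c with one noise token inserted at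
position `pos` (among the first six positions, never last). -/
def noisySent (ab cd : T × T) (nz : T) (pos : Fin 6) : List T :=
  ([ab.1, ab.2, ab.1, cd.1, cd.2, cd.1].take pos) ++
    nz :: ([ab.1, ab.2, ab.1, cd.1, cd.2, cd.1].drop pos)

/-- Empirical conditional next-token probability given a prefix, over all one-noisy
training sentences (pairs from S1, noise token from N, uniform insertion position). -/
noncomputable def condPNoisy (S1 : Finset (T × T)) (Nois : Finset T)
    (p : List T) (w : T) : ℝ :=
  (((Finset.univ : Finset ((T × T) × (T × T) × T × Fin 6)).filter
      (fun it => it.1 ∈ S1 ∧ it.2.1 ∈ S1 ∧ it.2.2.1 ∈ Nois ∧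
        (p ++ [w]) <+: noisySent it.1 it.2.1 it.2.2.1 it.2.2.2)).card : ℝ) /
  (((Finset.univ : Finset ((T × T) × (T × T) × T × Fin 6)).filter
      (fun it => it.1 ∈ S1 ∧ it.2.1 ∈ S1 ∧ it.2.2.1 ∈ Nois ∧
        p <+: noisySent it.1 it.2.1 it.2.2.1 it.2.2.2)).card : ℝ)

/-- One-noisy scenario of Theorem 4: if the first five tokens of a training sentence
contain no noise token, the sixth token is a noise token; hence the Bayes-optimal
conditional distribution after a noise-free length-5 prefix is supported on the noise
tokens, and on the test prompt a' b' a' c' d' (pairs from S2) every non-noise token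
— in particular the ICL target c' — receives conditional probability 0, so the ICL
accuracy is 0. -/
theorem stmt_16 (Vv Nois : Finset T) (S1 S2 : Finset (T × T))
    (hdisj : Disjoint Vv Nois) (hN : Nois.Nonempty)
    (hS1 : ∀ q ∈ S1, q.1 ∈ Vv ∧ q.2 ∈ Vv ∧ q.1 ≠ q.2)
    (hS2 : ∀ q ∈ S2, q.1 ∈ Vv ∧ q.2 ∈ Vv ∧ q.1 ≠ q.2)
    (hproj1 : ∀ v ∈ Vv, ∃ w, (v, w) ∈ S1) :
    (∀ (ab cd : T × T) (nz : T) (pos : Fin 6), ab ∈ S1 → cd ∈ S1 → nz ∈ Nois →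
      (∀ x ∈ (noisySent ab cd nz pos).take 5, x ∉ Nois) →
      (noisySent ab cd nz pos).getD 5 nz ∈ Nois) ∧
    (∀ ab' cd', ab' ∈ S2 → cd' ∈ S2 →
      ∀ w, w ∉ Nois →
        condPNoisy S1 Nois [ab'.1, ab'.2, ab'.1, cd'.1, cd'.2] w = 0) := by
  constructor
  · intro ab cd nz pos hab hcd hnz h5
    have hVN : ∀ x ∈ Vv, x ∉ Nois := fun x hx hn =>
      (Finset.disjoint_left.mp hdisj hx hn)
    fin_cases pos <;> simp [noisySent] at h5 ⊢ <;>
      first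
        | exact hnz
        | exact absurd hnz (by tauto)
  · intro ab' cd' hab' hcd' w hw
    unfold condPNoisy
    have hnum : ((Finset.univ : Finset ((T × T) × (T × T) × T × Fin 6)).filter
        (fun it => it.1 ∈ S1 ∧ it.2.1 ∈ S1 ∧ it.2.2.1 ∈ Nois ∧
          (([ab'.1, ab'.2, ab'.1, cd'.1, cd'.2] : List T) ++ [w]) <+:
            noisySent it.1 it.2.1 it.2.2.1 it.2.2.2)).card = 0 := by
      rw [Finset.card_eq_zero, Finset.filter_eq_empty_iff]
      rintro ⟨ab, cd, nz, pos⟩ -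
      rintro ⟨-, -, hnz, hpre⟩
      obtain ⟨h1, h2, -⟩ := hS2 ab' hab'
      obtain ⟨h3, h4, -⟩ := hS2 cd' hcd'
      have hVN : ∀ x ∈ Vv, x ≠ nz := fun x hx he =>
        (Finset.disjoint_left.mp hdisj hx (he ▸ hnz))
      fin_cases pos <;>
        simp [noisySent, List.cons_prefix_cons] at hpre
      · exact hVN _ h1 hpre.1
      · exact hVN _ h2 hpre.2.1
      · exact hVN _ h1 hpre.2.2.1
      · exact hVN _ h3 hpre.2.2.2.1
      · exact hVN _ h4 hpre.2.2.2.2.1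
      · exact hw (hpre.2.2.2.2.2 ▸ hnz)
    rw [hnum]
    simp

end OneNoisy
end
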